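/- arXiv:2301.02269 — 4 statements merged into one kernel-verified Lean document; each statement's English description precedes it below -/
import Mathlib

section
/- For every Ψ ∈ ℂ² ⊗ S(ℝ) and every t ∈ ℝ, ‖S₂₁(t)Ψ‖ ≤ (|λ|/|ω|)·|sin(tω)|·‖(N+1)^{1/2}Ψ‖, where S₂₁(t) = -(λ sin(tω)/ω)(e^{itω} σ₊ ⊗ a† + e^{-itω} σ₋ ⊗ a) and N = I ⊗ a†a. -/
/-! In the basis `e_j ⊗ φ_n`, `S₂₁(t)` sends the coefficient of `Ψ` at `e₁ ⊗ φ_n` to `e₀ ⊗ φ_{n+1}`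
and back, multiplying it by `λ sin(tω)/ω` times a phase times `√(n+1)`, and kills `e₀ ⊗ φ₀`.
Each coefficient of `S₂₁(t)Ψ` is therefore bounded by `|λ sin(tω)/ω|` times a distinct coefficient
of `(N+1)^{1/2}Ψ` (whose weight `√(n+1)` or `√(n+2)` is at least `√(n+1)`), and Parseval's
identity turns this coefficientwise bound into the norm bound. -/

open scoped InnerProductSpace

noncomputable section

/-- The subspace of vectors with rapidly decreasing coefficients with respect to the
orthonormal basis `Φ (j, n) = e_j ⊗ φ_n` of `ℂ² ⊗ L²(ℝ)`; this is the image of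
`ℂ² ⊗ S(ℝ)`. -/
def RapidDecay {H : Type*} [NormedAddCommGroup H] [InnerProductSpace ℂ H]
    (Φ : Fin 2 × ℕ → H) : Set H :=
  {Ψ | ∀ k : ℕ, ∃ C : ℝ, ∀ j : Fin 2, ∀ n : ℕ, ‖⟪Φ (j, n), Ψ⟫_ℂ‖ * (n : ℝ) ^ k ≤ C}

namespace HilbertBasis

variable {ι 𝕜 E : Type*} [RCLike 𝕜] [NormedAddCommGroup E] [InnerProductSpace 𝕜 E]
  (b : HilbertBasis ι 𝕜 E)

theorem hasSum_norm_inner_sq (x : E) : HasSum (fun i => ‖⟪b i, x⟫_𝕜‖ ^ 2) (‖x‖ ^ 2) := by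
  simpa [b.repr_apply_apply] using lp.hasSum_norm (p := 2) (by norm_num) (b.repr x)

theorem norm_le_mul_norm_of_norm_inner_le {x y : E} {c : ℝ} (hc : 0 ≤ c) {e : ι → ι}
    (he : e.Injective) (h : ∀ i, ‖⟪b i, x⟫_𝕜‖ ≤ c * ‖⟪b (e i), y⟫_𝕜‖) : ‖x‖ ≤ c * ‖y‖ := by
  refine (pow_le_pow_iff_left₀ (norm_nonneg x) (by positivity) two_ne_zero).1 ?_
  rw [mul_pow]
  refine hasSum_le_inj e he (fun _ _ => by positivity) (fun i => ?_) (b.hasSum_norm_inner_sq x)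
    ((b.hasSum_norm_inner_sq y).mul_left (c ^ 2))
  rw [← mul_pow]
  exact pow_le_pow_left₀ (norm_nonneg _) (h i) 2

end HilbertBasis

/-- The index `(j, n)` of `e_j ⊗ φ_n` exchanged with its partner by `σ₊ ⊗ a†` and `σ₋ ⊗ a`;
`(0, 0)`, killed by both, is its own partner. -/
def jcPartner : Fin 2 × ℕ → Fin 2 × ℕ
  | (0, 0) => (0, 0)
  | (0, n + 1) => (1, n)
  | (1, n) => (0, n + 1)

theorem jcPartner_involutive : Function.Involutive jcPartner
  | (0, 0) => rfl
  | (0, _ + 1) => rfl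
  | (1, _) => rfl

theorem norm_S21_le_general {H : Type*} [NormedAddCommGroup H] [InnerProductSpace ℂ H]
    [CompleteSpace H]
    (Φ : HilbertBasis (Fin 2 × ℕ) ℂ H)
    (lam ω : ℝ)
    (S21 : ℝ → H →ₗ[ℂ] H) (sqrtN1 : H →ₗ[ℂ] H)
    (hS0 : ∀ Ψ ∈ RapidDecay ⇑Φ, ∀ t : ℝ, ∀ n : ℕ,
      ⟪Φ (0, n), S21 t Ψ⟫_ℂ
        = -((lam * Real.sin (t * ω) / ω : ℝ) : ℂ) * Complex.exp (Complex.I * t * ω)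
            * (Real.sqrt n : ℂ) * ⟪Φ (1, n - 1), Ψ⟫_ℂ)
    (hS1 : ∀ Ψ ∈ RapidDecay ⇑Φ, ∀ t : ℝ, ∀ n : ℕ,
      ⟪Φ (1, n), S21 t Ψ⟫_ℂ
        = -((lam * Real.sin (t * ω) / ω : ℝ) : ℂ) * Complex.exp (-(Complex.I * t * ω))
            * (Real.sqrt (n + 1) : ℂ) * ⟪Φ (0, n + 1), Ψ⟫_ℂ)
    (hN : ∀ Ψ ∈ RapidDecay ⇑Φ, ∀ j : Fin 2, ∀ n : ℕ,
      ⟪Φ (j, n), sqrtN1 Ψ⟫_ℂ = (Real.sqrt (n + 1) : ℂ) * ⟪Φ (j, n), Ψ⟫_ℂ)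
    (Ψ : H) (hΨ : Ψ ∈ RapidDecay ⇑Φ) (t : ℝ) :
    ‖S21 t Ψ‖ ≤ |lam| / |ω| * |Real.sin (t * ω)| * ‖sqrtN1 Ψ‖ := by
  have hcoef : |lam * Real.sin (t * ω) / ω| = |lam| / |ω| * |Real.sin (t * ω)| := by
    rw [abs_div, abs_mul]; ring
  have hexp : ‖Complex.exp (Complex.I * t * ω)‖ = 1 := by
    rw [mul_assoc, ← Complex.ofReal_mul, mul_comm, Complex.norm_exp_ofReal_mul_I]
  have hexp' : ‖Complex.exp (-(Complex.I * t * ω))‖ = 1 := by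
    rw [Complex.exp_neg, norm_inv, hexp, inv_one]
  rw [← hcoef]
  refine Φ.norm_le_mul_norm_of_norm_inner_le (abs_nonneg _) jcPartner_involutive.injective ?_
  rintro ⟨j, n⟩
  match j, n with
  | 0, 0 =>
    rw [hS0 Ψ hΨ t, Nat.cast_zero, Real.sqrt_zero, Complex.ofReal_zero, mul_zero, zero_mul,
      norm_zero]
    positivity
  | 0, n + 1 =>
    rw [hS0 Ψ hΨ t, show jcPartner (0, n + 1) = (1, n) from rfl, hN Ψ hΨ]
    simp only [norm_mul, norm_neg, Complex.norm_real, Real.norm_eq_abs, hexp, mul_one]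
    rw [mul_assoc, Nat.add_sub_cancel, Nat.cast_succ]
  | 1, n =>
    rw [hS1 Ψ hΨ t, show jcPartner (1, n) = (0, n + 1) from rfl, hN Ψ hΨ]
    simp only [norm_mul, norm_neg, Complex.norm_real, Real.norm_eq_abs, hexp', mul_one]
    rw [mul_assoc]
    gcongr
    linarith

/-- For every `Ψ ∈ ℂ² ⊗ S(ℝ)` and every `t ∈ ℝ`,
`‖S₂₁(t)Ψ‖ ≤ (|λ|/|ω|)·|sin(tω)|·‖(N+1)^{1/2}Ψ‖`, where
`S₂₁(t) = -(λ sin(tω)/ω)(e^{itω} σ₊ ⊗ a† + e^{-itω} σ₋ ⊗ a)` and `N = I ⊗ a†a`.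
The operators are specified by their matrix elements in the basis `Φ (j, n) = e_j ⊗ φ_n`. -/
theorem norm_S21_le {H : Type*} [NormedAddCommGroup H] [InnerProductSpace ℂ H]
    [CompleteSpace H]
    (Φ : HilbertBasis (Fin 2 × ℕ) ℂ H)
    (lam ω : ℝ) (hω : ω ≠ 0)
    (S21 : ℝ → H →ₗ[ℂ] H) (sqrtN1 : H →ₗ[ℂ] H)
    (hS0 : ∀ Ψ ∈ RapidDecay ⇑Φ, ∀ t : ℝ, ∀ n : ℕ,
      ⟪Φ (0, n), S21 t Ψ⟫_ℂ
        = -((lam * Real.sin (t * ω) / ω : ℝ) : ℂ) * Complex.exp (Complex.I * t * ω)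
            * (Real.sqrt n : ℂ) * ⟪Φ (1, n - 1), Ψ⟫_ℂ)
    (hS1 : ∀ Ψ ∈ RapidDecay ⇑Φ, ∀ t : ℝ, ∀ n : ℕ,
      ⟪Φ (1, n), S21 t Ψ⟫_ℂ
        = -((lam * Real.sin (t * ω) / ω : ℝ) : ℂ) * Complex.exp (-(Complex.I * t * ω))
            * (Real.sqrt (n + 1) : ℂ) * ⟪Φ (0, n + 1), Ψ⟫_ℂ)
    (hN : ∀ Ψ ∈ RapidDecay ⇑Φ, ∀ j : Fin 2, ∀ n : ℕ,
      ⟪Φ (j, n), sqrtN1 Ψ⟫_ℂ = (Real.sqrt (n + 1) : ℂ) * ⟪Φ (j, n), Ψ⟫_ℂ)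
    (Ψ : H) (hΨ : Ψ ∈ RapidDecay ⇑Φ) (t : ℝ) :
    ‖S21 t Ψ‖ ≤ |lam| / |ω| * |Real.sin (t * ω)| * ‖sqrtN1 Ψ‖ :=
  norm_S21_le_general Φ lam ω S21 sqrtN1 hS0 hS1 hN Ψ hΨ t
end
end

section
/- For real g > 0 and integer n ≥ 1, set α = g√(n-1) and β = 3g²√((n+2)(n+3)). Then √(α² + β²) - β ≥ 1/6 - 1/(216 g² n) - 7/(12 n). -/
/-!
The second-order Taylor bound `√(β² + α²) ≥ β + α²/(2β) - α⁴/(8β³)` holds exactly, so it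
suffices to bound the two terms. With `s = √((n+2)(n+3))` squeezed between `n` and `n + 5/2`,
the main term `α²/(2β) = (n-1)/(6s)` is at least `1/6 - 7/(12n)`, and the correction
`α⁴/(8β³) = (n-1)²/(216 g² s³)` is at most `1/(216 g² n)`.
-/

open Real

theorem sq_div_sub_le_sqrt_sq_add_sq_sub (a : ℝ) {b : ℝ} (hb : 0 < b) :
    a ^ 2 / (2 * b) - a ^ 4 / (8 * b ^ 3) ≤ √(a ^ 2 + b ^ 2) - b := by
  set t := a ^ 2 / (2 * b) with ht
  have ht0 : 0 ≤ t := by positivity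
  have hcorr : a ^ 4 / (8 * b ^ 3) = t ^ 2 / (2 * b) := by
    rw [ht]; field_simp; ring
  rw [hcorr]
  set x := t - t ^ 2 / (2 * b)
  rcases le_or_gt x 0 with hx | hx
  · have hb_le : b ≤ √(a ^ 2 + b ^ 2) :=
      le_sqrt_of_sq_le (by nlinarith [sq_nonneg a])
    linarith
  · -- `2bx = a² - t²` and `0 < x ≤ t`, so `(b + x)² ≤ b² + a²`.
    have hxt : x ≤ t := by
      have : 0 ≤ t ^ 2 / (2 * b) := by positivity
      linarith
    have h2bx : 2 * b * x = a ^ 2 - t ^ 2 := by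
      simp only [x, ht]; field_simp
    rw [le_sub_iff_add_le', Real.le_sqrt (by positivity) (by positivity)]
    nlinarith

theorem le_sqrt_add_two_mul_add_three {x : ℝ} (hx : 0 ≤ x) : x ≤ √((x + 2) * (x + 3)) :=
  Real.le_sqrt_of_sq_le (by nlinarith)

theorem sqrt_add_two_mul_add_three_le {x : ℝ} (hx : 0 ≤ x) :
    √((x + 2) * (x + 3)) ≤ x + 5 / 2 :=
  Real.sqrt_le_iff.mpr ⟨by linarith, by nlinarith⟩

theorem one_sixth_sub_le_sub_one_div {N s : ℝ} (hN : 1 ≤ N) (hs : 0 < s) (hsN : s ≤ N + 5 / 2) :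
    1 / 6 - 7 / (12 * N) ≤ (N - 1) / (6 * s) :=
  calc 1 / 6 - 7 / (12 * N) ≤ (N - 1) / (6 * (N + 5 / 2)) := by
        rw [div_sub_div _ _ (by norm_num) (by positivity),
          div_le_div_iff₀ (by positivity) (by positivity)]
        nlinarith
    _ ≤ (N - 1) / (6 * s) :=
        div_le_div_of_nonneg_left (by linarith) (by positivity) (by linarith)

theorem sub_one_sq_div_le_inv {g N s : ℝ} (hg : 0 < g) (hN : 1 ≤ N) (hNs : N ≤ s) :
    (N - 1) ^ 2 / (216 * g ^ 2 * s ^ 3) ≤ 1 / (216 * g ^ 2 * N) := by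
  have hcube : N * (N - 1) ^ 2 ≤ s ^ 3 := by
    nlinarith [pow_le_pow_left₀ (by linarith) hNs 3, sq_nonneg N]
  rw [div_le_div_iff₀ (mul_pos (by positivity) (pow_pos (by linarith) 3)) (by positivity)]
  nlinarith [mul_le_mul_of_nonneg_left hcube (by positivity : (0 : ℝ) ≤ 216 * g ^ 2)]

/-- The numerical inequality underlying the RWA lower bound on Fock states: for `g > 0`
and `n ≥ 1`, with `α = g√(n-1)` and `β = 3g²√((n+2)(n+3))`,
`√(α² + β²) - β ≥ 1/6 - 1/(216 g² n) - 7/(12 n)`. -/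
theorem rwa_fock_lower_bound_numeric (g : ℝ) (n : ℕ) (hg : 0 < g) (hn : 1 ≤ n) :
    1 / 6 - 1 / (216 * g ^ 2 * n) - 7 / (12 * n)
      ≤ Real.sqrt ((g * Real.sqrt ((n : ℝ) - 1)) ^ 2
            + (3 * g ^ 2 * Real.sqrt (((n : ℝ) + 2) * ((n : ℝ) + 3))) ^ 2)
        - 3 * g ^ 2 * Real.sqrt (((n : ℝ) + 2) * ((n : ℝ) + 3)) := by
  have hN : (1 : ℝ) ≤ n := by exact_mod_cast hn
  set s := √(((n : ℝ) + 2) * ((n : ℝ) + 3))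
  have hNs : (n : ℝ) ≤ s := le_sqrt_add_two_mul_add_three (by linarith)
  have hs : 0 < s := by linarith
  have hα : (g * √((n : ℝ) - 1)) ^ 2 = g ^ 2 * (n - 1) := by
    rw [mul_pow, Real.sq_sqrt (by linarith)]
  have hmain : (g * √((n : ℝ) - 1)) ^ 2 / (2 * (3 * g ^ 2 * s)) = (n - 1) / (6 * s) := by
    rw [hα]; field_simp; ring
  have hcorr : (g * √((n : ℝ) - 1)) ^ 4 / (8 * (3 * g ^ 2 * s) ^ 3)
      = (n - 1) ^ 2 / (216 * g ^ 2 * s ^ 3) := by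
    rw [show (g * √((n : ℝ) - 1)) ^ 4 = ((g * √((n : ℝ) - 1)) ^ 2) ^ 2 by ring, hα]
    field_simp; ring
  have htaylor := sq_div_sub_le_sqrt_sq_add_sq_sub (g * √((n : ℝ) - 1))
    (show 0 < 3 * g ^ 2 * s by positivity)
  rw [hmain, hcorr] at htaylor
  linarith [one_sixth_sub_le_sub_one_div hN hs (sqrt_add_two_mul_add_three_le (by linarith)),
    sub_one_sq_div_le_inv hg hN hNs]
end

section
/- For every Ψ ∈ ℂ² ⊗ L²(ℝ) and every T > 0, the difference of evolutions under the quantum Rabi and Jaynes–Cummings Hamiltonians satisfies lim_{ω→∞} sup_{|t|≤T} ‖(e^{-itH_RWA} - e^{-itH})Ψ‖ = 0, with λ, Δ = Ω - ω fixed as ω → ∞. -/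
/-!
The Jaynes–Cummings dynamics commutes with the excitation number `a†a + σ₊σ₋`, so started at a
basis vector `Φ k` it stays in the (at most two-dimensional) block of that excitation number.
Hence `⟪e^{-itH} Φ k, e^{-itH_RWA} Φ k⟫` is a finite overlap `P(t)` with `P(0) = 1`, and
`‖(e^{-itH_RWA} - e^{-itH}) Φ k‖² ≤ 2 ‖1 - P(t)‖`. The derivative of `P` consists only of the two
counter-rotating matrix elements, and these oscillate with frequency `±(2ω + Δ)` up to a bounded
remainder; subtracting them divided by `±i(2ω + Δ)` ("integrating by parts") shows
`‖P(t) - 1‖ = O((1 + |t|) / ω)`. Since both propagators are unitary, convergence on the basis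
vectors extends to every `Ψ` by density of their span.
-/

open scoped InnerProductSpace

noncomputable section

open Complex (I)
open Filter Topology
open scoped ComplexConjugate

theorem hasDerivAt_conj_mul_of_schrodinger {a b : ℝ → ℂ} {Ea Eb : ℝ} {α β : ℂ} {t : ℝ}
    (ha : HasDerivAt a (-I * (Ea * a t + α)) t) (hb : HasDerivAt b (-I * (Eb * b t + β)) t) :
    HasDerivAt (fun s => conj (a s) * b s)
      (I * (Ea - Eb : ℝ) * (conj (a t) * b t) + I * (conj α * b t - conj (a t) * β)) t := by
  refine (ha.star.mul hb).congr_deriv ?_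
  simp only [Complex.star_def, map_mul, map_add, map_neg, Complex.conj_I, Complex.conj_ofReal]
  push_cast
  ring

theorem hasDerivAt_const_mul_conj_mul_of_schrodinger (c : ℂ) {a b : ℝ → ℂ} {Ea Eb ν : ℝ}
    {α β : ℂ} {t : ℝ} (ha : HasDerivAt a (-I * (Ea * a t + α)) t)
    (hb : HasDerivAt b (-I * (Eb * b t + β)) t) (hν : Ea - Eb = ν) :
    HasDerivAt (fun s => c * (conj (a s) * b s))
      (I * ν * (c * (conj (a t) * b t)) + c * (I * (conj α * b t - conj (a t) * β))) t :=
  ((hasDerivAt_conj_mul_of_schrodinger ha hb).const_mul c).congr_deriv (by rw [hν]; ring)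

theorem norm_sub_le_of_hasDerivAt_oscillating {h g₁ g₂ : ℝ → ℂ} {μ B K : ℝ} (hμ : 0 < μ)
    (hh : ∀ t, HasDerivAt h (g₁ t + g₂ t) t)
    (hg₁ : ∀ t, ∃ r, ‖r‖ ≤ K ∧ HasDerivAt g₁ (I * (-μ : ℝ) * g₁ t + r) t)
    (hg₂ : ∀ t, ∃ r, ‖r‖ ≤ K ∧ HasDerivAt g₂ (I * μ * g₂ t + r) t)
    (hB : ∀ t, ‖g₁ t‖ + ‖g₂ t‖ ≤ B) (t : ℝ) :
    ‖h t - h 0‖ ≤ (2 * B + 2 * K * |t|) / μ := by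
  choose r₁ hr₁ hg₁ using hg₁
  choose r₂ hr₂ hg₂ using hg₂
  have hμ' : (μ : ℂ) ≠ 0 := by exact_mod_cast hμ.ne'
  have hnorm : ∀ z : ℂ, ‖z / (I * μ)‖ = ‖z‖ / μ := fun z => by
    rw [norm_div, norm_mul, Complex.norm_I, one_mul, Complex.norm_real, Real.norm_of_nonneg hμ.le]
  -- dividing the fast terms by their frequency removes them from the derivative
  let F s := h s + (g₁ s - g₂ s) / (I * μ)
  have hF : ∀ s, HasDerivAt F ((r₁ s - r₂ s) / (I * μ)) s := fun s =>
    ((hh s).add (((hg₁ s).sub (hg₂ s)).div_const (I * μ))).congr_deriv (by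
      field_simp; push_cast; ring)
  have hF' : ∀ s, ‖(r₁ s - r₂ s) / (I * μ)‖ ≤ 2 * K / μ := fun s => by
    rw [hnorm]; gcongr; linarith [norm_sub_le (r₁ s) (r₂ s), hr₁ s, hr₂ s]
  have hG : ∀ s, ‖(g₁ s - g₂ s) / (I * μ)‖ ≤ B / μ := fun s => by
    rw [hnorm]; gcongr; linarith [norm_sub_le (g₁ s) (g₂ s), hB s]
  have hFt : ‖F t - F 0‖ ≤ 2 * K / μ * |t| := by
    simpa using Convex.norm_image_sub_le_of_norm_hasDerivWithin_le
      (fun s _ => (hF s).hasDerivWithinAt) (fun s _ => hF' s) convex_univ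
      (Set.mem_univ 0) (Set.mem_univ t)
  calc ‖h t - h 0‖
      = ‖(F t - F 0) - (g₁ t - g₂ t) / (I * μ) + (g₁ 0 - g₂ 0) / (I * μ)‖ := by
        simp only [F]; ring_nf
    _ ≤ ‖F t - F 0‖ + ‖(g₁ t - g₂ t) / (I * μ)‖ + ‖(g₁ 0 - g₂ 0) / (I * μ)‖ :=
        norm_add_le_of_le (norm_sub_le _ _) le_rfl
    _ ≤ 2 * K / μ * |t| + B / μ + B / μ := add_le_add (add_le_add hFt (hG t)) (hG 0)
    _ = (2 * B + 2 * K * |t|) / μ := by ring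

theorem norm_ofReal_sqrt_mul_le {x y : ℝ} {z : ℂ} (hxy : x ≤ y) (hz : ‖z‖ ≤ 1) :
    ‖(Real.sqrt x : ℂ) * z‖ ≤ Real.sqrt y := by
  rw [norm_mul, Complex.norm_real, Real.norm_of_nonneg (Real.sqrt_nonneg _)]
  exact (mul_le_of_le_one_right (Real.sqrt_nonneg _) hz).trans (Real.sqrt_le_sqrt hxy)

theorem norm_counterRotating_remainder_le {lam x₀ x₁ x₂ x₃ y : ℝ} {z₁ z₂ z₃ w₁ w₂ : ℂ}
    (hy : 0 ≤ y) (hx₀ : x₀ ≤ y) (hx₁ : x₁ ≤ y) (hx₂ : x₂ ≤ y) (hx₃ : x₃ ≤ y)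
    (hz₁ : ‖z₁‖ ≤ 1) (hz₂ : ‖z₂‖ ≤ 1) (hz₃ : ‖z₃‖ ≤ 1) (hw₁ : ‖w₁‖ ≤ 1) (hw₂ : ‖w₂‖ ≤ 1) :
    ‖I * lam * (Real.sqrt x₀ : ℂ) * (I * (conj (lam * ((Real.sqrt x₁ : ℂ) * z₁
      + (Real.sqrt x₂ : ℂ) * z₂)) * w₁ - conj z₃ * (lam * (Real.sqrt x₃ : ℂ) * w₂)))‖
      ≤ 3 * lam ^ 2 * y := by
  set S := Real.sqrt y
  set c : ℂ := I * lam * (Real.sqrt x₀ : ℂ)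
  set α : ℂ := lam * ((Real.sqrt x₁ : ℂ) * z₁ + (Real.sqrt x₂ : ℂ) * z₂)
  set β : ℂ := lam * (Real.sqrt x₃ : ℂ) * w₂
  have hc : ‖c‖ ≤ |lam| * S := by
    simpa [c, mul_assoc] using mul_le_mul_of_nonneg_left
      (norm_ofReal_sqrt_mul_le hx₀ (norm_one (α := ℂ)).le) (abs_nonneg lam)
  have hα : ‖α‖ ≤ |lam| * (2 * S) := by
    rw [norm_mul, Complex.norm_real, Real.norm_eq_abs, two_mul]
    gcongr
    exact (norm_add_le _ _).trans
      (add_le_add (norm_ofReal_sqrt_mul_le hx₁ hz₁) (norm_ofReal_sqrt_mul_le hx₂ hz₂))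
  have hβ : ‖β‖ ≤ |lam| * S := by
    rw [show β = lam * ((Real.sqrt x₃ : ℂ) * w₂) from mul_assoc _ _ _, norm_mul,
      Complex.norm_real, Real.norm_eq_abs]
    gcongr
    exact norm_ofReal_sqrt_mul_le hx₃ hw₂
  have hdiff : ‖conj α * w₁ - conj z₃ * β‖ ≤ ‖α‖ + ‖β‖ := by
    refine (norm_sub_le _ _).trans (add_le_add ?_ ?_) <;>
      rw [norm_mul, RCLike.norm_conj]
    exacts [mul_le_of_le_one_right (norm_nonneg _) hw₁, mul_le_of_le_one_left (norm_nonneg _) hz₃]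
  calc ‖c * (I * (conj α * w₁ - conj z₃ * β))‖ ≤ ‖c‖ * (‖α‖ + ‖β‖) := by
        rw [norm_mul c, norm_mul I, Complex.norm_I, one_mul]
        gcongr
    _ ≤ (|lam| * S) * (|lam| * (2 * S) + |lam| * S) := by
        have : 0 ≤ |lam| * S := (norm_nonneg c).trans hc
        gcongr
    _ = 3 * lam ^ 2 * y := by rw [← sq_abs lam, ← Real.sq_sqrt hy]; ring

theorem norm_counterRotating_le {lam x y : ℝ} {z w : ℂ} (hxy : x ≤ y) (hz : ‖z‖ ≤ 1)
    (hw : ‖w‖ ≤ 1) : ‖I * lam * (Real.sqrt x : ℂ) * (conj z * w)‖ ≤ |lam| * Real.sqrt y := by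
  rw [norm_mul, norm_mul, norm_mul, norm_mul, Complex.norm_I, one_mul, Complex.norm_real,
    Real.norm_eq_abs, Complex.norm_real, Real.norm_of_nonneg (Real.sqrt_nonneg _),
    RCLike.norm_conj, mul_assoc]
  gcongr
  exact (mul_le_of_le_one_right (Real.sqrt_nonneg _) (mul_le_one₀ hz (norm_nonneg _) hw)).trans
    (Real.sqrt_le_sqrt hxy)

/-- The eigenvalue of `a†a + σ₊σ₋` on `Φ k`, where `j = 0` labels the excited spin state. -/
def excitation (k : Fin 2 × ℕ) : ℕ := k.2 + 1 - k.1

def excitationBlock : ℕ → Finset (Fin 2 × ℕ)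
  | 0 => {(1, 0)}
  | p + 1 => {(0, p), (1, p + 1)}

theorem mem_excitationBlock {k : Fin 2 × ℕ} {N : ℕ} :
    k ∈ excitationBlock N ↔ excitation k = N := by
  obtain ⟨j, n⟩ := k
  fin_cases j <;> cases N <;> simp [excitationBlock, excitation]

section Flows

variable (lam Δ ω : ℝ)

/-- `a k t` plays the role of `⟪Φ k, u t⟫` for a solution of `i u' = H u`. -/
structure IsRabiFlow (a : Fin 2 × ℕ → ℝ → ℂ) : Prop where
  hasDerivAt_zero (n : ℕ) (t : ℝ) : HasDerivAt (a (0, n))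
    (-I * ((((ω + Δ) / 2 + ω * n : ℝ) : ℂ) * a (0, n) t
      + (lam : ℂ) * ((Real.sqrt (n + 1) : ℂ) * a (1, n + 1) t
        + (Real.sqrt n : ℂ) * a (1, n - 1) t))) t
  hasDerivAt_one (n : ℕ) (t : ℝ) : HasDerivAt (a (1, n))
    (-I * (((-(ω + Δ) / 2 + ω * n : ℝ) : ℂ) * a (1, n) t
      + (lam : ℂ) * ((Real.sqrt (n + 1) : ℂ) * a (0, n + 1) t
        + (Real.sqrt n : ℂ) * a (0, n - 1) t))) t

structure IsJCFlow (b : Fin 2 × ℕ → ℝ → ℂ) : Prop where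
  hasDerivAt_zero (n : ℕ) (t : ℝ) : HasDerivAt (b (0, n))
    (-I * ((((ω + Δ) / 2 + ω * n : ℝ) : ℂ) * b (0, n) t
      + (lam : ℂ) * (Real.sqrt (n + 1) : ℂ) * b (1, n + 1) t)) t
  hasDerivAt_one (n : ℕ) (t : ℝ) : HasDerivAt (b (1, n))
    (-I * (((-(ω + Δ) / 2 + ω * n : ℝ) : ℂ) * b (1, n) t
      + (lam : ℂ) * (Real.sqrt n : ℂ) * b (0, n - 1) t)) t

def blockOverlap (a b : Fin 2 × ℕ → ℝ → ℂ) (N : ℕ) (t : ℝ) : ℂ :=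
  ∑ k ∈ excitationBlock N, conj (a k t) * b k t

theorem blockOverlap_zero (a b : Fin 2 × ℕ → ℝ → ℂ) :
    blockOverlap a b 0 = fun t => conj (a (1, 0) t) * b (1, 0) t := by
  ext t; simp [blockOverlap, excitationBlock]

theorem blockOverlap_succ (a b : Fin 2 × ℕ → ℝ → ℂ) (p : ℕ) :
    blockOverlap a b (p + 1) = fun t =>
      conj (a (0, p) t) * b (0, p) t + conj (a (1, p + 1) t) * b (1, p + 1) t := by
  ext t; simp [blockOverlap, excitationBlock]

/-- Zero for `N ≤ 1`, where the factor is `√(N - 1) = √0` (truncated subtraction). -/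
def counterRotatingDown (a b : Fin 2 × ℕ → ℝ → ℂ) (N : ℕ) (t : ℝ) : ℂ :=
  I * lam * (Real.sqrt (N - 1 : ℕ) : ℂ) * (conj (a (1, N - 2) t) * b (0, N - 1) t)

def counterRotatingUp (a b : Fin 2 × ℕ → ℝ → ℂ) (N : ℕ) (t : ℝ) : ℂ :=
  I * lam * (Real.sqrt (N + 1) : ℂ) * (conj (a (0, N + 1) t) * b (1, N) t)

variable {lam Δ ω} {a b : Fin 2 × ℕ → ℝ → ℂ}

theorem IsJCFlow.hasDerivAt_blockOverlap_self (hb : IsJCFlow lam Δ ω b) (N : ℕ) (t : ℝ) :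
    HasDerivAt (blockOverlap b b N) 0 t := by
  cases N with
  | zero =>
    rw [blockOverlap_zero]
    refine (hasDerivAt_conj_mul_of_schrodinger (hb.hasDerivAt_one 0 t)
      (hb.hasDerivAt_one 0 t)).congr_deriv ?_
    simp
  | succ p =>
    rw [blockOverlap_succ]
    have h1 := hb.hasDerivAt_one (p + 1) t
    rw [Nat.add_sub_cancel] at h1
    refine ((hasDerivAt_conj_mul_of_schrodinger (hb.hasDerivAt_zero p t)
      (hb.hasDerivAt_zero p t)).add (hasDerivAt_conj_mul_of_schrodinger h1 h1)).congr_deriv ?_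
    simp only [map_mul, Complex.conj_ofReal]
    push_cast
    ring

theorem IsJCFlow.eq_zero_of_forall_mem_block (hb : IsJCFlow lam Δ ω b) {N : ℕ}
    (h0 : ∀ k ∈ excitationBlock N, b k 0 = 0) {k : Fin 2 × ℕ} (hk : k ∈ excitationBlock N)
    (t : ℝ) : b k t = 0 := by
  have hconst := is_const_of_deriv_eq_zero
    (fun s => (hb.hasDerivAt_blockOverlap_self N s).differentiableAt)
    (fun s => (hb.hasDerivAt_blockOverlap_self N s).deriv) t 0
  have hsum : ∑ k ∈ excitationBlock N, ‖b k t‖ ^ 2 = 0 := by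
    simp only [blockOverlap, Complex.conj_mul'] at hconst
    rw [Finset.sum_eq_zero (f := fun k => (‖b k 0‖ : ℂ) ^ 2) fun k hk => by simp [h0 k hk]]
      at hconst
    exact_mod_cast hconst
  have := (Finset.sum_eq_zero_iff_of_nonneg (fun _ _ => by positivity)).1 hsum k hk
  simpa using this

theorem IsJCFlow.eq_zero_of_excitation_ne (hb : IsJCFlow lam Δ ω b) {k₀ : Fin 2 × ℕ}
    (h0 : ∀ k ≠ k₀, b k 0 = 0) {k : Fin 2 × ℕ} (hk : excitation k ≠ excitation k₀) (t : ℝ) :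
    b k t = 0 :=
  hb.eq_zero_of_forall_mem_block
    (fun j hj => h0 j (by rintro rfl; exact hk (mem_excitationBlock.1 hj).symm))
    (mem_excitationBlock.2 rfl) t

theorem IsRabiFlow.hasDerivAt_blockOverlap (ha : IsRabiFlow lam Δ ω a)
    (hb : IsJCFlow lam Δ ω b) (N : ℕ) (t : ℝ) :
    HasDerivAt (blockOverlap a b N)
      (counterRotatingDown lam a b N t + counterRotatingUp lam a b N t) t := by
  cases N with
  | zero =>
    rw [blockOverlap_zero]
    refine (hasDerivAt_conj_mul_of_schrodinger (ha.hasDerivAt_one 0 t)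
      (hb.hasDerivAt_one 0 t)).congr_deriv ?_
    simp [counterRotatingDown, counterRotatingUp]
    ring
  | succ p =>
    rw [blockOverlap_succ]
    have hb1 := hb.hasDerivAt_one (p + 1) t
    rw [Nat.add_sub_cancel] at hb1
    refine ((hasDerivAt_conj_mul_of_schrodinger (ha.hasDerivAt_zero p t)
      (hb.hasDerivAt_zero p t)).add
        (hasDerivAt_conj_mul_of_schrodinger (ha.hasDerivAt_one (p + 1) t) hb1)).congr_deriv ?_
    simp only [counterRotatingDown, counterRotatingUp, map_mul, map_add, Complex.conj_ofReal,
      Nat.add_sub_cancel, show p + 1 - 2 = p - 1 by omega]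
    push_cast
    ring

theorem IsRabiFlow.counterRotatingUp_oscillates (ha : IsRabiFlow lam Δ ω a)
    (hb : IsJCFlow lam Δ ω b) (ha1 : ∀ k t, ‖a k t‖ ≤ 1) (hb1 : ∀ k t, ‖b k t‖ ≤ 1)
    (N : ℕ) (t : ℝ) :
    ∃ r, ‖r‖ ≤ 3 * lam ^ 2 * (N + 2) ∧ HasDerivAt (counterRotatingUp lam a b N)
      (I * (2 * ω + Δ : ℝ) * counterRotatingUp lam a b N t + r) t := by
  have h := hasDerivAt_const_mul_conj_mul_of_schrodinger (I * lam * (Real.sqrt (N + 1) : ℂ))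
    (ha.hasDerivAt_zero (N + 1) t) (hb.hasDerivAt_one N t) (ν := 2 * ω + Δ) (by push_cast; ring)
  refine ⟨_, ?_, h⟩
  apply norm_counterRotating_remainder_le (by positivity) _ _ _ _ (ha1 _ t) (ha1 _ t) (ha1 _ t)
    (hb1 _ t) (hb1 _ t) <;> push_cast <;> linarith

theorem IsRabiFlow.counterRotatingDown_oscillates (ha : IsRabiFlow lam Δ ω a)
    (hb : IsJCFlow lam Δ ω b) (ha1 : ∀ k t, ‖a k t‖ ≤ 1) (hb1 : ∀ k t, ‖b k t‖ ≤ 1)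
    (N : ℕ) (t : ℝ) :
    ∃ r, ‖r‖ ≤ 3 * lam ^ 2 * (N + 2) ∧ HasDerivAt (counterRotatingDown lam a b N)
      (I * (-(2 * ω + Δ) : ℝ) * counterRotatingDown lam a b N t + r) t := by
  rcases Nat.lt_or_ge N 2 with hN | hN
  · have hzero : counterRotatingDown lam a b N = fun _ => 0 := by
      ext s
      simp [counterRotatingDown, Nat.sub_eq_zero_of_le (Nat.le_of_lt_succ hN)]
    refine ⟨0, by rw [norm_zero]; positivity, ?_⟩
    simpa [hzero] using hasDerivAt_const t (0 : ℂ)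
  · obtain ⟨q, rfl⟩ := Nat.exists_eq_add_of_le' hN
    have h := hasDerivAt_const_mul_conj_mul_of_schrodinger
      (I * lam * (Real.sqrt (q + 2 - 1 : ℕ) : ℂ)) (ha.hasDerivAt_one q t)
      (hb.hasDerivAt_zero (q + 1) t) (ν := -(2 * ω + Δ)) (by push_cast; ring)
    refine ⟨_, ?_, h⟩
    apply norm_counterRotating_remainder_le (by positivity) _ _ _ _ (ha1 _ t) (ha1 _ t)
      (ha1 _ t) (hb1 _ t) (hb1 _ t) <;> push_cast <;> linarith

end Flows

theorem HilbertBasis.inner_eq_sum_of_inner_eq_zero {ι 𝕜 E : Type*} [RCLike 𝕜]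
    [NormedAddCommGroup E] [InnerProductSpace 𝕜 E] (Φ : HilbertBasis ι 𝕜 E) {s : Finset ι}
    {x y : E} (hy : ∀ i ∉ s, ⟪Φ i, y⟫_𝕜 = 0) :
    ⟪x, y⟫_𝕜 = ∑ i ∈ s, conj ⟪Φ i, x⟫_𝕜 * ⟪Φ i, y⟫_𝕜 := by
  rw [← Φ.tsum_inner_mul_inner x y, tsum_eq_sum fun i hi => by rw [hy i hi, mul_zero]]
  simp [inner_conj_symm]

theorem norm_sub_sq_le_two_mul_norm_one_sub_inner {𝕜 E : Type*} [RCLike 𝕜]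
    [NormedAddCommGroup E] [InnerProductSpace 𝕜 E] {x y : E} (hx : ‖x‖ = 1) (hy : ‖y‖ = 1) :
    ‖y - x‖ ^ 2 ≤ 2 * ‖1 - ⟪x, y⟫_𝕜‖ := by
  have h := RCLike.re_le_norm (1 - ⟪x, y⟫_𝕜)
  rw [map_sub, RCLike.one_re] at h
  rw [norm_sub_sq (𝕜 := 𝕜), hx, hy, inner_re_symm]
  linarith

theorem Orthonormal.mem_rapidDecay {E : Type*} [NormedAddCommGroup E] [InnerProductSpace ℂ E]
    {Φ : Fin 2 × ℕ → E} (hΦ : Orthonormal ℂ Φ) (k₀ : Fin 2 × ℕ) : Φ k₀ ∈ RapidDecay Φ := by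
  intro m
  refine ⟨(k₀.2 : ℝ) ^ m, fun j n => ?_⟩
  rcases eq_or_ne (j, n) k₀ with rfl | hne
  · simp [hΦ.1]
  · rw [hΦ.inner_eq_zero hne, norm_zero, zero_mul]
    positivity

theorem hasDerivAt_inner_of_schrodinger {E : Type*} [NormedAddCommGroup E]
    [InnerProductSpace ℂ E] {H : E →ₗ[ℂ] E} {f : ℝ → E} {t : ℝ}
    (hf : HasDerivAt f (-I • H (f t)) t) (x : E) :
    HasDerivAt (fun s => ⟪x, f s⟫_ℂ) (-I * ⟪x, H (f t)⟫_ℂ) t := by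
  simpa [inner_smul_right] using (hasDerivAt_const t x).inner ℂ hf

theorem tendsto_apply_of_dense_span {ι 𝕜 E F : Type*} [NontriviallyNormedField 𝕜]
    [NormedAddCommGroup E] [NormedSpace 𝕜 E] [NormedAddCommGroup F] [NormedSpace 𝕜 F]
    {l : Filter ι} {D : ι → E →L[𝕜] F} {C : ℝ} (hD : ∀ᶠ i in l, ∀ x, ‖D i x‖ ≤ C * ‖x‖)
    {s : Set E} (hs : (Submodule.span 𝕜 s).topologicalClosure = ⊤)
    (h : ∀ x ∈ s, Tendsto (fun i => D i x) l (𝓝 0)) (x : E) :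
    Tendsto (fun i => D i x) l (𝓝 0) := by
  let S : Submodule 𝕜 E :=
    { carrier := {x | Tendsto (fun i => D i x) l (𝓝 0)}
      add_mem' := fun hx hy => by simpa using hx.add hy
      zero_mem' := by simpa using tendsto_const_nhds
      smul_mem' := fun c x hx => by simpa using hx.const_smul c }
  have hS : IsClosed (S : Set E) := by
    refine isClosed_of_closure_subset fun x hx => Metric.tendsto_nhds.2 fun ε hε => ?_
    have hδ : 0 < ε / 2 / (|C| + 1) := by positivity
    obtain ⟨y, hy, hxy⟩ := Metric.mem_closure_iff.1 hx _ hδ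
    filter_upwards [hD, Metric.tendsto_nhds.1 hy (ε / 2) (half_pos hε)] with i hCi hyi
    rw [dist_eq_norm] at hxy
    rw [dist_zero_right] at hyi ⊢
    have hxy' : ‖D i (x - y)‖ < ε / 2 := calc
      ‖D i (x - y)‖ ≤ (|C| + 1) * ‖x - y‖ := (hCi _).trans (by gcongr; linarith [le_abs_self C])
      _ < (|C| + 1) * (ε / 2 / (|C| + 1)) := by gcongr
      _ = ε / 2 := by field_simp
    calc ‖D i x‖ ≤ ‖D i (x - y)‖ + ‖D i y‖ := by
          rw [map_sub]; exact norm_le_norm_sub_add _ _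
      _ < ε := by linarith
  have hS_top : S = ⊤ :=
    top_le_iff.1 (hs ▸ Submodule.topologicalClosure_minimal _ (Submodule.span_le.2 h) hS)
  exact (hS_top.symm ▸ Submodule.mem_top : x ∈ S)

section Propagators

variable {E : Type*} [NormedAddCommGroup E] [InnerProductSpace ℂ E]
  (Φ : HilbertBasis (Fin 2 × ℕ) ℂ E) {lam Δ ω : ℝ}

theorem norm_sub_sq_le_of_isRabiFlow_of_isJCFlow {u v : ℝ → E} {k₀ : Fin 2 × ℕ}
    (hu : IsRabiFlow lam Δ ω fun k t => ⟪Φ k, u t⟫_ℂ)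
    (hv : IsJCFlow lam Δ ω fun k t => ⟪Φ k, v t⟫_ℂ)
    (hu1 : ∀ t, ‖u t‖ = 1) (hv1 : ∀ t, ‖v t‖ = 1) (hu0 : u 0 = Φ k₀) (hv0 : v 0 = Φ k₀)
    (hμ : 0 < 2 * ω + Δ) (t : ℝ) :
    ‖v t - u t‖ ^ 2 ≤ (8 * |lam| * Real.sqrt (excitation k₀ + 2)
      + 12 * lam ^ 2 * (excitation k₀ + 2) * |t|) / (2 * ω + Δ) := by
  set N := excitation k₀
  have hcoeff : ∀ {w : ℝ → E}, (∀ t, ‖w t‖ = 1) → ∀ k t, ‖⟪Φ k, w t⟫_ℂ‖ ≤ 1 := fun hw k t =>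
    (norm_inner_le_norm _ _).trans (by rw [Φ.orthonormal.1 k, hw, one_mul])
  have hΦ : ∀ k, ⟪Φ k, Φ k₀⟫_ℂ = if k = k₀ then 1 else 0 :=
    fun k => orthonormal_iff_ite.1 Φ.orthonormal k k₀
  have hvanish : ∀ s, ∀ k ∉ excitationBlock N, ⟪Φ k, v s⟫_ℂ = 0 := fun s k hk =>
    hv.eq_zero_of_excitation_ne (k₀ := k₀) (fun j hj => by simp [hv0, hΦ, hj])
      (fun h => hk (mem_excitationBlock.2 h)) s
  have hinner : ∀ s, ⟪u s, v s⟫_ℂ = blockOverlap (fun k t => ⟪Φ k, u t⟫_ℂ)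
      (fun k t => ⟪Φ k, v t⟫_ℂ) N s := fun s =>
    Φ.inner_eq_sum_of_inner_eq_zero (hvanish s)
  have hinit : blockOverlap (fun k t => ⟪Φ k, u t⟫_ℂ) (fun k t => ⟪Φ k, v t⟫_ℂ) N 0 = 1 := by
    simp [blockOverlap, hu0, hv0, hΦ, (mem_excitationBlock.2 rfl : k₀ ∈ excitationBlock N)]
  have hN : ((N - 1 : ℕ) : ℝ) ≤ N + 2 := by linarith [(Nat.cast_le (α := ℝ)).2 (N.sub_le 1)]
  have hosc := norm_sub_le_of_hasDerivAt_oscillating hμ (hu.hasDerivAt_blockOverlap hv N)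
    (hu.counterRotatingDown_oscillates hv (hcoeff hu1) (hcoeff hv1) N)
    (hu.counterRotatingUp_oscillates hv (hcoeff hu1) (hcoeff hv1) N)
    (B := 2 * |lam| * Real.sqrt (N + 2)) (fun s => by
      rw [mul_assoc, two_mul]
      exact add_le_add
        (norm_counterRotating_le hN (hcoeff hu1 _ s) (hcoeff hv1 _ s))
        (norm_counterRotating_le (by linarith) (hcoeff hu1 _ s) (hcoeff hv1 _ s))) t
  calc ‖v t - u t‖ ^ 2 ≤ 2 * ‖1 - ⟪u t, v t⟫_ℂ‖ :=
        norm_sub_sq_le_two_mul_norm_one_sub_inner (hu1 t) (hv1 t)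
    _ ≤ 2 * ((2 * (2 * |lam| * Real.sqrt (N + 2)) + 2 * (3 * lam ^ 2 * (N + 2)) * |t|)
          / (2 * ω + Δ)) := by
        rw [hinner, ← hinit, norm_sub_rev]
        gcongr
    _ = _ := by ring

theorem tendsto_sub_of_isRabiFlow_of_isJCFlow {u v : ℝ → ℝ → E} {k₀ : Fin 2 × ℕ} (T : ℝ)
    (hu : ∀ ω > 0, IsRabiFlow lam Δ ω fun k t => ⟪Φ k, u ω t⟫_ℂ)
    (hv : ∀ ω > 0, IsJCFlow lam Δ ω fun k t => ⟪Φ k, v ω t⟫_ℂ)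
    (hu1 : ∀ ω > 0, ∀ t, ‖u ω t‖ = 1) (hv1 : ∀ ω > 0, ∀ t, ‖v ω t‖ = 1)
    (hu0 : ∀ ω > 0, u ω 0 = Φ k₀) (hv0 : ∀ ω > 0, v ω 0 = Φ k₀) :
    Tendsto (fun p : ℝ × ℝ => v p.1 p.2 - u p.1 p.2) (atTop ×ˢ 𝓟 {t | |t| ≤ T}) (𝓝 0) := by
  have hlim (C : ℝ) : Tendsto (fun ω : ℝ => Real.sqrt (C / (2 * ω + Δ))) atTop (𝓝 0) := by
    simpa using (tendsto_const_nhds.div_atTop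
      (tendsto_atTop_add_const_right _ Δ (tendsto_id.const_mul_atTop two_pos))).sqrt
  refine squeeze_zero_norm' ?_ ((hlim (8 * |lam| * Real.sqrt (excitation k₀ + 2)
    + 12 * lam ^ 2 * (excitation k₀ + 2) * T)).comp tendsto_fst)
  filter_upwards [(eventually_gt_atTop (max 0 (-Δ))).prod_inl _,
    (eventually_principal.2 fun t ht => ht : ∀ᶠ t in 𝓟 {t : ℝ | |t| ≤ T}, |t| ≤ T).prod_inr _]
    with ⟨ω, t⟩ hω ht
  have hω0 : 0 < ω := (le_max_left _ _).trans_lt hω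
  have hμ : 0 < 2 * ω + Δ := by linarith [(le_max_right 0 (-Δ)).trans_lt hω]
  have hT : 0 ≤ T := (abs_nonneg t).trans ht
  rw [Function.comp_apply, Real.le_sqrt (norm_nonneg _) (by positivity)]
  exact (norm_sub_sq_le_of_isRabiFlow_of_isJCFlow Φ (hu ω hω0) (hv ω hω0) (hu1 ω hω0)
    (hv1 ω hω0) (hu0 ω hω0) (hv0 ω hω0) hμ t).trans (by gcongr)

end Propagators

/-- `W1 ω` and `W2 ω` are the propagators of the quantum Rabi and Jaynes–Cummings Hamiltonians
(`Ω = ω + Δ`), given through their matrix elements in the basis `Φ (j, n) = e_j ⊗ φ_n` on the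
core `ℂ² ⊗ S(ℝ)`. -/
theorem rwa_limit_general {HH : Type*} [NormedAddCommGroup HH] [InnerProductSpace ℂ HH]
    (Φ : HilbertBasis (Fin 2 × ℕ) ℂ HH)
    (lam Δ : ℝ)
    (HRabi HRWA : ℝ → HH →ₗ[ℂ] HH)
    (W1 W2 : ℝ → ℝ → HH →L[ℂ] HH)
    (hRa : ∀ ω > (0:ℝ), ∀ Ψ ∈ RapidDecay ⇑Φ, ∀ n : ℕ,
      ⟪Φ (0, n), HRabi ω Ψ⟫_ℂ
        = (((ω + Δ) / 2 + ω * n : ℝ) : ℂ) * ⟪Φ (0, n), Ψ⟫_ℂ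
          + (lam : ℂ) * ((Real.sqrt (n + 1) : ℂ) * ⟪Φ (1, n + 1), Ψ⟫_ℂ
              + (Real.sqrt n : ℂ) * ⟪Φ (1, n - 1), Ψ⟫_ℂ))
    (hRb : ∀ ω > (0:ℝ), ∀ Ψ ∈ RapidDecay ⇑Φ, ∀ n : ℕ,
      ⟪Φ (1, n), HRabi ω Ψ⟫_ℂ
        = ((-(ω + Δ) / 2 + ω * n : ℝ) : ℂ) * ⟪Φ (1, n), Ψ⟫_ℂ
          + (lam : ℂ) * ((Real.sqrt (n + 1) : ℂ) * ⟪Φ (0, n + 1), Ψ⟫_ℂ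
              + (Real.sqrt n : ℂ) * ⟪Φ (0, n - 1), Ψ⟫_ℂ))
    (hWa : ∀ ω > (0:ℝ), ∀ Ψ ∈ RapidDecay ⇑Φ, ∀ n : ℕ,
      ⟪Φ (0, n), HRWA ω Ψ⟫_ℂ
        = (((ω + Δ) / 2 + ω * n : ℝ) : ℂ) * ⟪Φ (0, n), Ψ⟫_ℂ
          + (lam : ℂ) * (Real.sqrt (n + 1) : ℂ) * ⟪Φ (1, n + 1), Ψ⟫_ℂ)
    (hWb : ∀ ω > (0:ℝ), ∀ Ψ ∈ RapidDecay ⇑Φ, ∀ n : ℕ,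
      ⟪Φ (1, n), HRWA ω Ψ⟫_ℂ
        = ((-(ω + Δ) / 2 + ω * n : ℝ) : ℂ) * ⟪Φ (1, n), Ψ⟫_ℂ
          + (lam : ℂ) * (Real.sqrt n : ℂ) * ⟪Φ (0, n - 1), Ψ⟫_ℂ)
    (hW10 : ∀ ω > (0:ℝ), W1 ω 0 = 1) (hW20 : ∀ ω > (0:ℝ), W2 ω 0 = 1)
    (hW1unit : ∀ ω > (0:ℝ), ∀ t : ℝ, ∀ x y : HH, ⟪W1 ω t x, W1 ω t y⟫_ℂ = ⟪x, y⟫_ℂ)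
    (hW2unit : ∀ ω > (0:ℝ), ∀ t : ℝ, ∀ x y : HH, ⟪W2 ω t x, W2 ω t y⟫_ℂ = ⟪x, y⟫_ℂ)
    (hinv1 : ∀ ω > (0:ℝ), ∀ t : ℝ, ∀ Ψ ∈ RapidDecay ⇑Φ, W1 ω t Ψ ∈ RapidDecay ⇑Φ)
    (hinv2 : ∀ ω > (0:ℝ), ∀ t : ℝ, ∀ Ψ ∈ RapidDecay ⇑Φ, W2 ω t Ψ ∈ RapidDecay ⇑Φ)
    (hode1 : ∀ ω > (0:ℝ), ∀ Ψ ∈ RapidDecay ⇑Φ, ∀ t : ℝ,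
      HasDerivAt (fun s => W1 ω s Ψ) ((-Complex.I) • HRabi ω (W1 ω t Ψ)) t)
    (hode2 : ∀ ω > (0:ℝ), ∀ Ψ ∈ RapidDecay ⇑Φ, ∀ t : ℝ,
      HasDerivAt (fun s => W2 ω s Ψ) ((-Complex.I) • HRWA ω (W2 ω t Ψ)) t) :
    ∀ Ψ : HH, ∀ T > (0:ℝ), ∀ ε > (0:ℝ), ∃ ω₀ : ℝ, 0 < ω₀ ∧
      ∀ ω ≥ ω₀, ∀ t : ℝ, |t| ≤ T → ‖W2 ω t Ψ - W1 ω t Ψ‖ < ε := by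
  intro Ψ T _ ε hε
  have hRD := Φ.orthonormal.mem_rapidDecay
  have hnorm1 : ∀ ω > 0, ∀ t x, ‖W1 ω t x‖ = ‖x‖ := fun ω hω t =>
    ((W1 ω t).toLinearMap.isometryOfInner (hW1unit ω hω t)).norm_map
  have hnorm2 : ∀ ω > 0, ∀ t x, ‖W2 ω t x‖ = ‖x‖ := fun ω hω t =>
    ((W2 ω t).toLinearMap.isometryOfInner (hW2unit ω hω t)).norm_map
  have hbasis (k₀ : Fin 2 × ℕ) := tendsto_sub_of_isRabiFlow_of_isJCFlow Φ T
    (u := fun ω t => W1 ω t (Φ k₀)) (v := fun ω t => W2 ω t (Φ k₀)) (k₀ := k₀)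
    (fun ω hω => have hd := fun t => hasDerivAt_inner_of_schrodinger (hode1 ω hω _ (hRD k₀) t)
      ⟨fun n t => (hd t _).congr_deriv (by rw [hRa ω hω _ (hinv1 ω hω t _ (hRD k₀))]),
        fun n t => (hd t _).congr_deriv (by rw [hRb ω hω _ (hinv1 ω hω t _ (hRD k₀))])⟩)
    (fun ω hω => have hd := fun t => hasDerivAt_inner_of_schrodinger (hode2 ω hω _ (hRD k₀) t)
      ⟨fun n t => (hd t _).congr_deriv (by rw [hWa ω hω _ (hinv2 ω hω t _ (hRD k₀))]),
        fun n t => (hd t _).congr_deriv (by rw [hWb ω hω _ (hinv2 ω hω t _ (hRD k₀))])⟩)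
    (fun ω hω t => (hnorm1 ω hω t _).trans (Φ.orthonormal.1 k₀))
    (fun ω hω t => (hnorm2 ω hω t _).trans (Φ.orthonormal.1 k₀))
    (fun ω hω => by simp [hW10 ω hω]) (fun ω hω => by simp [hW20 ω hω])
  have hbound : ∀ᶠ p in atTop ×ˢ 𝓟 {t : ℝ | |t| ≤ T},
      ∀ x, ‖(W2 p.1 p.2 - W1 p.1 p.2) x‖ ≤ 2 * ‖x‖ := by
    filter_upwards [(eventually_gt_atTop 0).prod_inl _] with p hp x
    rw [sub_apply]
    exact (norm_sub_le _ _).trans_eq (by rw [hnorm1 _ hp, hnorm2 _ hp, two_mul])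
  have hΨ := tendsto_apply_of_dense_span hbound Φ.dense_span (Set.forall_mem_range.2 hbasis) Ψ
  obtain ⟨ω₀, hω₀⟩ :=
    eventually_atTop.1 (eventually_prod_principal_iff.1 (Metric.tendsto_nhds.1 hΨ ε hε))
  exact ⟨max ω₀ 1, by positivity, fun ω hω t ht => by
    simpa [dist_eq_norm] using hω₀ ω (le_of_max_le_left hω) t ht⟩

/-- Validity of the rotating wave approximation in the limit `ω → ∞`: for every
`Ψ ∈ ℂ² ⊗ L²(ℝ)` and every `T > 0`,
`lim_{ω→∞} sup_{|t|≤T} ‖(e^{-itH_RWA} - e^{-itH})Ψ‖ = 0`, with `λ` and `Δ = Ω - ω`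
fixed as `ω → ∞`.  For each `ω > 0`, `W₁ ω` and `W₂ ω` are the unitary propagators of
the quantum Rabi Hamiltonian `H = (Ω/2)σ_z⊗I + I⊗ωa†a + λσ_x⊗(a+a†)` and of the
Jaynes–Cummings Hamiltonian `H_RWA = (Ω/2)σ_z⊗I + I⊗ωa†a + λ(σ₊⊗a + σ₋⊗a†)`
(with `Ω = ω + Δ`), all operators being specified through their matrix elements in the
orthonormal basis `Φ (j, n) = e_j ⊗ φ_n` on the core `ℂ² ⊗ S(ℝ)`. -/
theorem rwa_limit {HH : Type*} [NormedAddCommGroup HH] [InnerProductSpace ℂ HH]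
    [CompleteSpace HH]
    (Φ : HilbertBasis (Fin 2 × ℕ) ℂ HH)
    (lam Δ : ℝ) (hlam : 0 < lam)
    (HRabi HRWA : ℝ → HH →ₗ[ℂ] HH)
    (W1 W2 : ℝ → ℝ → HH →L[ℂ] HH)
    (hRa : ∀ ω > (0:ℝ), ∀ Ψ ∈ RapidDecay ⇑Φ, ∀ n : ℕ,
      ⟪Φ (0, n), HRabi ω Ψ⟫_ℂ
        = (((ω + Δ) / 2 + ω * n : ℝ) : ℂ) * ⟪Φ (0, n), Ψ⟫_ℂ
          + (lam : ℂ) * ((Real.sqrt (n + 1) : ℂ) * ⟪Φ (1, n + 1), Ψ⟫_ℂ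
              + (Real.sqrt n : ℂ) * ⟪Φ (1, n - 1), Ψ⟫_ℂ))
    (hRb : ∀ ω > (0:ℝ), ∀ Ψ ∈ RapidDecay ⇑Φ, ∀ n : ℕ,
      ⟪Φ (1, n), HRabi ω Ψ⟫_ℂ
        = ((-(ω + Δ) / 2 + ω * n : ℝ) : ℂ) * ⟪Φ (1, n), Ψ⟫_ℂ
          + (lam : ℂ) * ((Real.sqrt (n + 1) : ℂ) * ⟪Φ (0, n + 1), Ψ⟫_ℂ
              + (Real.sqrt n : ℂ) * ⟪Φ (0, n - 1), Ψ⟫_ℂ))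
    (hWa : ∀ ω > (0:ℝ), ∀ Ψ ∈ RapidDecay ⇑Φ, ∀ n : ℕ,
      ⟪Φ (0, n), HRWA ω Ψ⟫_ℂ
        = (((ω + Δ) / 2 + ω * n : ℝ) : ℂ) * ⟪Φ (0, n), Ψ⟫_ℂ
          + (lam : ℂ) * (Real.sqrt (n + 1) : ℂ) * ⟪Φ (1, n + 1), Ψ⟫_ℂ)
    (hWb : ∀ ω > (0:ℝ), ∀ Ψ ∈ RapidDecay ⇑Φ, ∀ n : ℕ,
      ⟪Φ (1, n), HRWA ω Ψ⟫_ℂ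
        = ((-(ω + Δ) / 2 + ω * n : ℝ) : ℂ) * ⟪Φ (1, n), Ψ⟫_ℂ
          + (lam : ℂ) * (Real.sqrt n : ℂ) * ⟪Φ (0, n - 1), Ψ⟫_ℂ)
    (hW10 : ∀ ω > (0:ℝ), W1 ω 0 = 1) (hW20 : ∀ ω > (0:ℝ), W2 ω 0 = 1)
    (hW1unit : ∀ ω > (0:ℝ), ∀ t : ℝ, ∀ x y : HH, ⟪W1 ω t x, W1 ω t y⟫_ℂ = ⟪x, y⟫_ℂ)
    (hW2unit : ∀ ω > (0:ℝ), ∀ t : ℝ, ∀ x y : HH, ⟪W2 ω t x, W2 ω t y⟫_ℂ = ⟪x, y⟫_ℂ)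
    (hW1surj : ∀ ω > (0:ℝ), ∀ t : ℝ, Function.Surjective (W1 ω t))
    (hW2surj : ∀ ω > (0:ℝ), ∀ t : ℝ, Function.Surjective (W2 ω t))
    (hinv1 : ∀ ω > (0:ℝ), ∀ t : ℝ, ∀ Ψ ∈ RapidDecay ⇑Φ, W1 ω t Ψ ∈ RapidDecay ⇑Φ)
    (hinv2 : ∀ ω > (0:ℝ), ∀ t : ℝ, ∀ Ψ ∈ RapidDecay ⇑Φ, W2 ω t Ψ ∈ RapidDecay ⇑Φ)
    (hode1 : ∀ ω > (0:ℝ), ∀ Ψ ∈ RapidDecay ⇑Φ, ∀ t : ℝ,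
      HasDerivAt (fun s => W1 ω s Ψ) ((-Complex.I) • HRabi ω (W1 ω t Ψ)) t)
    (hode2 : ∀ ω > (0:ℝ), ∀ Ψ ∈ RapidDecay ⇑Φ, ∀ t : ℝ,
      HasDerivAt (fun s => W2 ω s Ψ) ((-Complex.I) • HRWA ω (W2 ω t Ψ)) t) :
    ∀ Ψ : HH, ∀ T > (0:ℝ), ∀ ε > (0:ℝ), ∃ ω₀ : ℝ, 0 < ω₀ ∧
      ∀ ω ≥ ω₀, ∀ t : ℝ, |t| ≤ T → ‖W2 ω t Ψ - W1 ω t Ψ‖ < ε :=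
  rwa_limit_general Φ lam Δ HRabi HRWA W1 W2 hRa hRb hWa hWb hW10 hW20 hW1unit hW2unit hinv1 hinv2
    hode1 hode2
end
end

section
/- For Fock states Φ_{j,n} = e_j ⊗ φ_n with n ≥ 1, in the resonant case Δ = 0 and with g = λ/ω, sup_{t∈[0,π/ω]} ‖(U₂(t) - U₁(t))Φ_{j,n}‖ ≤ 5g√(n+3), assuming 0 < g. -/
/-!
In the interaction picture the Jaynes–Cummings propagator leaves every two-level subspace
`span {Φ (0, m), Φ (1, m + 1)}` invariant and acts on it as a rotation at the Rabi frequency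
`λ √(m + 1)`. Along this rotation `V s`, the derivative of `⟪U₁(s) x, V s⟫` only sees the
counter-rotating part `H₁(s) - H₂` of the Rabi Hamiltonian, whose matrix elements next to the
subspace are at most `λ √(n + 3) ‖x‖`, with a factor `|cos| + |sin| ≤ √2` from the rotation.
Integrating over `[0, t]` and testing against a dense set of `x` (as `U₁(t)` is unitary) gives
`‖(U₂(t) - U₁(t)) Φ_{j,n}‖ ≤ √2 λ √(n + 3) t`, and `√2 π ≤ 5`.
-/

open scoped InnerProductSpace
open Real

noncomputable section

lemma abs_cos_add_abs_sin_le_sqrt_two (θ : ℝ) : |cos θ| + |sin θ| ≤ √2 := by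
  refine Real.le_sqrt_of_sq_le ?_
  nlinarith [sq_abs (cos θ), sq_abs (sin θ), sin_sq_add_cos_sq θ, sq_nonneg (|cos θ| - |sin θ|)]

lemma sqrt_two_mul_pi_le_five : √2 * π ≤ 5 := by
  nlinarith [sqrt_two_lt_three_halves, pi_lt_d2, pi_pos, sqrt_nonneg 2]

section RapidDecay

variable {H : Type*} [NormedAddCommGroup H] [InnerProductSpace ℂ H]

def rapidDecaySubmodule (Φ : Fin 2 × ℕ → H) : Submodule ℂ H where
  carrier := RapidDecay Φ
  zero_mem' _ := ⟨0, fun _ _ => by simp⟩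
  add_mem' {x y} hx hy k := by
    obtain ⟨C₁, h₁⟩ := hx k
    obtain ⟨C₂, h₂⟩ := hy k
    refine ⟨C₁ + C₂, fun j n => ?_⟩
    calc ‖⟪Φ (j, n), x + y⟫_ℂ‖ * (n : ℝ) ^ k
        ≤ ‖⟪Φ (j, n), x⟫_ℂ‖ * (n : ℝ) ^ k + ‖⟪Φ (j, n), y⟫_ℂ‖ * (n : ℝ) ^ k := by
          rw [inner_add_right, ← add_mul]
          gcongr
          exact norm_add_le _ _
      _ ≤ C₁ + C₂ := add_le_add (h₁ j n) (h₂ j n)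
  smul_mem' c x hx k := by
    obtain ⟨C, hC⟩ := hx k
    refine ⟨‖c‖ * C, fun j n => ?_⟩
    rw [inner_smul_right, norm_mul, mul_assoc]
    exact mul_le_mul_of_nonneg_left (hC j n) (norm_nonneg c)

lemma Orthonormal.apply_mem_rapidDecay {Φ : Fin 2 × ℕ → H} (hΦ : Orthonormal ℂ Φ)
    (i : Fin 2 × ℕ) : Φ i ∈ RapidDecay Φ := fun k => by
  refine ⟨(i.2 : ℝ) ^ k, fun j n => ?_⟩
  rw [orthonormal_iff_ite.mp hΦ]
  split_ifs with h
  · simp [← h]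
  · simp only [norm_zero, zero_mul]
    positivity

lemma HilbertBasis.dense_rapidDecay (Φ : HilbertBasis (Fin 2 × ℕ) ℂ H) :
    Dense (RapidDecay ⇑Φ) := by
  have hspan : Submodule.span ℂ (Set.range ⇑Φ) ≤ rapidDecaySubmodule ⇑Φ :=
    Submodule.span_le.mpr (Set.range_subset_iff.mpr Φ.orthonormal.apply_mem_rapidDecay)
  refine Dense.mono hspan ?_
  rw [Submodule.dense_iff_topologicalClosure_eq_top]
  exact Φ.dense_span

end RapidDecay

lemma norm_le_of_dense_norm_inner_le {𝕜 E : Type*} [RCLike 𝕜] [NormedAddCommGroup E]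
    [InnerProductSpace 𝕜 E] {U : E →L[𝕜] E} (hU : ∀ x, ‖U x‖ = ‖x‖)
    (hsurj : Function.Surjective U) {D : Set E} (hD : Dense D) {y : E} {K : ℝ} (hK : 0 ≤ K)
    (h : ∀ x ∈ D, ‖⟪U x, y⟫_𝕜‖ ≤ K * ‖x‖) : ‖y‖ ≤ K := by
  have h' : ∀ x, ‖⟪U x, y⟫_𝕜‖ ≤ K * ‖x‖ :=
    hD.induction h (isClosed_le (by fun_prop) (by fun_prop))
  obtain ⟨w, rfl⟩ := hsurj y
  have hsq : ‖U w‖ ^ 2 ≤ K * ‖U w‖ := by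
    simpa [inner_self_eq_norm_sq_to_K, hU] using h' w
  nlinarith [norm_nonneg (U w)]

section TwoLevel

variable {E : Type*} [NormedAddCommGroup E] [InnerProductSpace ℂ E]

/-- The resonant Jaynes–Cummings evolution of `e` inside an invariant two-level subspace
`span {e, f}` with Rabi frequency `Ω`. -/
def rabiRotation (Ω : ℝ) (e f : E) (s : ℝ) : E :=
  (cos (Ω * s) : ℂ) • e - (Complex.I * sin (Ω * s)) • f

@[simp]
lemma rabiRotation_zero (Ω : ℝ) (e f : E) : rabiRotation Ω e f 0 = e := by
  simp [rabiRotation]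

lemma inner_rabiRotation (Ω : ℝ) (e f y : E) (s : ℝ) :
    ⟪y, rabiRotation Ω e f s⟫_ℂ
      = cos (Ω * s) * ⟪y, e⟫_ℂ - Complex.I * sin (Ω * s) * ⟪y, f⟫_ℂ := by
  simp only [rabiRotation, inner_sub_right, inner_smul_right]

lemma norm_rabiRotation {e f : E} (he : ‖e‖ = 1) (hf : ‖f‖ = 1) (hef : ⟪e, f⟫_ℂ = 0)
    (Ω s : ℝ) : ‖rabiRotation Ω e f s‖ = 1 := by
  have hpyth := norm_add_sq_eq_norm_sq_add_norm_sq_of_inner_eq_zero (𝕜 := ℂ)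
    ((cos (Ω * s) : ℂ) • e) (-((Complex.I * sin (Ω * s)) • f)) (by simp [inner_smul_left,
      inner_smul_right, hef])
  simp only [← sub_eq_add_neg, norm_neg, norm_smul, norm_mul, he, hf, Complex.norm_real,
    Complex.norm_I, norm_eq_abs, mul_one, one_mul, abs_mul_abs_self] at hpyth
  have hsq : ‖rabiRotation Ω e f s‖ ^ 2 = 1 := by
    rw [sq, rabiRotation, hpyth]
    nlinarith [cos_sq_add_sin_sq (Ω * s)]
  exact (pow_eq_one_iff_of_nonneg (norm_nonneg _) two_ne_zero).mp hsq

lemma hasDerivAt_rabiRotation (Ω : ℝ) (e f : E) (s : ℝ) :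
    HasDerivAt (rabiRotation Ω e f) (-(Complex.I * Ω) • rabiRotation Ω f e s) s := by
  have hlin : HasDerivAt (fun s : ℝ => Ω * s) Ω s := by
    simpa using (hasDerivAt_id s).const_mul Ω
  have hcos := ((hasDerivAt_cos (Ω * s)).comp s hlin).ofReal_comp
  have hsin := ((hasDerivAt_sin (Ω * s)).comp s hlin).ofReal_comp
  refine ((hcos.smul_const e).sub ((hsin.const_mul Complex.I).smul_const f)).congr_deriv ?_
  simp only [rabiRotation, smul_sub, smul_smul]
  push_cast
  match_scalars <;> ring_nf
  simp [Complex.I_sq]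

lemma inner_apply_rabiRotation {A : E → E} {Ω : ℝ} {e f b : E}
    (he : ⟪e, A b⟫_ℂ = Ω * ⟪f, b⟫_ℂ) (hf : ⟪f, A b⟫_ℂ = Ω * ⟪e, b⟫_ℂ) (s : ℝ) :
    ⟪A b, rabiRotation Ω e f s⟫_ℂ = Ω * ⟪b, rabiRotation Ω f e s⟫_ℂ := by
  rw [inner_rabiRotation, inner_rabiRotation, ← inner_conj_symm (A b) e,
    ← inner_conj_symm (A b) f, he, hf]
  simp only [map_mul, Complex.conj_ofReal, inner_conj_symm]
  ring

lemma hasDerivAt_inner_rabiRotation {A : E → E} {Ω : ℝ} {e f : E} {u : ℝ → E} {B : E}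
    {s : ℝ} (hu : HasDerivAt u (-Complex.I • B) s)
    (he : ⟪e, A (u s)⟫_ℂ = Ω * ⟪f, u s⟫_ℂ) (hf : ⟪f, A (u s)⟫_ℂ = Ω * ⟪e, u s⟫_ℂ) :
    HasDerivAt (fun s => ⟪u s, rabiRotation Ω e f s⟫_ℂ)
      (Complex.I * ⟪B - A (u s), rabiRotation Ω e f s⟫_ℂ) s := by
  refine (hu.inner ℂ (hasDerivAt_rabiRotation Ω e f s)).congr_deriv ?_
  rw [inner_sub_left, inner_apply_rabiRotation he hf, inner_smul_left, inner_smul_right]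
  simp only [map_neg, Complex.conj_I, neg_neg]
  ring

lemma norm_inner_rabiRotation_le {Ω c : ℝ} {e f y : E} (he : ‖⟪y, e⟫_ℂ‖ ≤ c)
    (hf : ‖⟪y, f⟫_ℂ‖ ≤ c) (s : ℝ) : ‖⟪y, rabiRotation Ω e f s⟫_ℂ‖ ≤ √2 * c := by
  rw [inner_rabiRotation]
  calc _ ≤ |cos (Ω * s)| * c + |sin (Ω * s)| * c := by
        refine (norm_sub_le _ _).trans (add_le_add ?_ ?_)
        · rw [norm_mul, Complex.norm_real, norm_eq_abs]
          gcongr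
        · rw [norm_mul, norm_mul, Complex.norm_I, one_mul, Complex.norm_real, norm_eq_abs]
          gcongr
    _ = (|cos (Ω * s)| + |sin (Ω * s)|) * c := by ring
    _ ≤ √2 * c := mul_le_mul_of_nonneg_right (abs_cos_add_abs_sin_le_sqrt_two _)
        ((norm_nonneg _).trans he)

structure IsPropagator (U : ℝ → E →L[ℂ] E) (A : ℝ → E → E) (D : Set E) : Prop where
  zero : U 0 = 1
  inner_map_map : ∀ t x y, ⟪U t x, U t y⟫_ℂ = ⟪x, y⟫_ℂ
  mapsTo : ∀ t, Set.MapsTo (U t) D D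
  hasDerivAt : ∀ x ∈ D, ∀ t, HasDerivAt (fun s => U s x) ((-Complex.I) • A t (U t x)) t

namespace IsPropagator

variable {U : ℝ → E →L[ℂ] E} {A : ℝ → E → E} {D : Set E} {Ω : ℝ} {e f : E}

lemma norm_apply (hU : IsPropagator U A D) (t : ℝ) (x : E) : ‖U t x‖ = ‖x‖ := by
  rw [@norm_eq_sqrt_re_inner ℂ, @norm_eq_sqrt_re_inner ℂ, hU.inner_map_map]

lemma apply_eq_rabiRotation {A₀ : E → E} (hU : IsPropagator U (fun _ => A₀) D) (heD : e ∈ D)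
    (he : ‖e‖ = 1) (hf : ‖f‖ = 1) (hef : ⟪e, f⟫_ℂ = 0)
    (hA₀ : ∀ b ∈ D, ⟪e, A₀ b⟫_ℂ = Ω * ⟪f, b⟫_ℂ ∧ ⟪f, A₀ b⟫_ℂ = Ω * ⟪e, b⟫_ℂ) (t : ℝ) :
    U t e = rabiRotation Ω e f t := by
  have hderiv (s : ℝ) : HasDerivAt (fun s => ⟪U s e, rabiRotation Ω e f s⟫_ℂ) 0 s := by
    obtain ⟨hAe, hAf⟩ := hA₀ _ (hU.mapsTo s heD)
    simpa using hasDerivAt_inner_rabiRotation (hU.hasDerivAt e heD s) hAe hAf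
  have hinner : ⟪U t e, rabiRotation Ω e f t⟫_ℂ = 1 := by
    rw [is_const_of_deriv_eq_zero (fun s => (hderiv s).differentiableAt)
      (fun s => (hderiv s).deriv) t 0, hU.zero, rabiRotation_zero]
    simp [inner_self_eq_norm_sq_to_K, he]
  exact (inner_eq_one_iff_of_norm_eq_one (by rw [hU.norm_apply, he])
    (norm_rabiRotation he hf hef Ω t)).mp hinner

lemma norm_inner_rabiRotation_sub_le {A₀ : E → E} {c t : ℝ} {x : E}
    (hU : IsPropagator U A D) (hx : x ∈ D) (ht : 0 ≤ t)
    (hA₀ : ∀ b ∈ D, ⟪e, A₀ b⟫_ℂ = Ω * ⟪f, b⟫_ℂ ∧ ⟪f, A₀ b⟫_ℂ = Ω * ⟪e, b⟫_ℂ)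
    (hA : ∀ s, ∀ b ∈ D, ‖⟪e, A s b - A₀ b⟫_ℂ‖ ≤ c * ‖b‖ ∧ ‖⟪f, A s b - A₀ b⟫_ℂ‖ ≤ c * ‖b‖) :
    ‖⟪U t x, rabiRotation Ω e f t⟫_ℂ - ⟪x, e⟫_ℂ‖ ≤ √2 * c * t * ‖x‖ := by
  have hderiv (s : ℝ) : HasDerivAt (fun s => ⟪U s x, rabiRotation Ω e f s⟫_ℂ)
      (Complex.I * ⟪A s (U s x) - A₀ (U s x), rabiRotation Ω e f s⟫_ℂ) s := by
    obtain ⟨hAe, hAf⟩ := hA₀ _ (hU.mapsTo s hx)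
    exact hasDerivAt_inner_rabiRotation (hU.hasDerivAt x hx s) hAe hAf
  have hbound (s : ℝ) :
      ‖Complex.I * ⟪A s (U s x) - A₀ (U s x), rabiRotation Ω e f s⟫_ℂ‖ ≤ √2 * (c * ‖x‖) := by
    obtain ⟨hAe, hAf⟩ := hA s _ (hU.mapsTo s hx)
    rw [norm_inner_symm, hU.norm_apply] at hAe hAf
    rw [norm_mul, Complex.norm_I, one_mul]
    exact norm_inner_rabiRotation_le hAe hAf s
  have hmvt := norm_image_sub_le_of_norm_deriv_le_segment'
    (fun s _ => (hderiv s).hasDerivWithinAt) (fun s _ => hbound s) t ⟨ht, le_rfl⟩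
  simp only [hU.zero, one_apply_eq_self, rabiRotation_zero, sub_zero] at hmvt
  exact hmvt.trans_eq (by ring)

lemma norm_sub_apply_le {U₀ : ℝ → E →L[ℂ] E} {A₀ : E → E} {c t : ℝ}
    (hU₀ : IsPropagator U₀ (fun _ => A₀) D) (hU : IsPropagator U A D)
    (hsurj : Function.Surjective (U t)) (hD : Dense D) (heD : e ∈ D) (he : ‖e‖ = 1)
    (hf : ‖f‖ = 1) (hef : ⟪e, f⟫_ℂ = 0) (hc : 0 ≤ c) (ht : 0 ≤ t)
    (hA₀ : ∀ b ∈ D, ⟪e, A₀ b⟫_ℂ = Ω * ⟪f, b⟫_ℂ ∧ ⟪f, A₀ b⟫_ℂ = Ω * ⟪e, b⟫_ℂ)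
    (hA : ∀ s, ∀ b ∈ D, ‖⟪e, A s b - A₀ b⟫_ℂ‖ ≤ c * ‖b‖ ∧ ‖⟪f, A s b - A₀ b⟫_ℂ‖ ≤ c * ‖b‖) :
    ‖U₀ t e - U t e‖ ≤ √2 * c * t := by
  rw [hU₀.apply_eq_rabiRotation heD he hf hef hA₀]
  refine norm_le_of_dense_norm_inner_le (hU.norm_apply t) hsurj hD (by positivity)
    fun x hx => ?_
  rw [inner_sub_right, hU.inner_map_map]
  exact hU.norm_inner_rabiRotation_sub_le hx ht hA₀ hA

end IsPropagator

end TwoLevel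

lemma norm_inner_counterRotating_le {H : Type*} [NormedAddCommGroup H] [InnerProductSpace ℂ H]
    {Φ : HilbertBasis (Fin 2 × ℕ) ℂ H} {lam ω : ℝ} (hlam : 0 ≤ lam)
    {H1 : ℝ → H →ₗ[ℂ] H} {H2 : H →ₗ[ℂ] H}
    (hH1a : ∀ Ψ ∈ RapidDecay ⇑Φ, ∀ s : ℝ, ∀ m : ℕ,
      ⟪Φ (0, m), H1 s Ψ⟫_ℂ
        = (lam : ℂ) * ((Real.sqrt (m + 1) : ℂ) * ⟪Φ (1, m + 1), Ψ⟫_ℂ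
            + Complex.exp (2 * Complex.I * s * ω) * (Real.sqrt m : ℂ)
                * ⟪Φ (1, m - 1), Ψ⟫_ℂ))
    (hH1b : ∀ Ψ ∈ RapidDecay ⇑Φ, ∀ s : ℝ, ∀ m : ℕ,
      ⟪Φ (1, m), H1 s Ψ⟫_ℂ
        = (lam : ℂ) * ((Real.sqrt m : ℂ) * ⟪Φ (0, m - 1), Ψ⟫_ℂ
            + Complex.exp (-(2 * Complex.I * s * ω)) * (Real.sqrt (m + 1) : ℂ)
                * ⟪Φ (0, m + 1), Ψ⟫_ℂ))
    (hH2a : ∀ Ψ ∈ RapidDecay ⇑Φ, ∀ m : ℕ,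
      ⟪Φ (0, m), H2 Ψ⟫_ℂ = (lam : ℂ) * (Real.sqrt (m + 1) : ℂ) * ⟪Φ (1, m + 1), Ψ⟫_ℂ)
    (hH2b : ∀ Ψ ∈ RapidDecay ⇑Φ, ∀ m : ℕ,
      ⟪Φ (1, m), H2 Ψ⟫_ℂ = (lam : ℂ) * (Real.sqrt m : ℂ) * ⟪Φ (0, m - 1), Ψ⟫_ℂ)
    {b : H} (hb : b ∈ RapidDecay ⇑Φ) (s : ℝ) (j : Fin 2) (m : ℕ) :
    ‖⟪Φ (j, m), H1 s b - H2 b⟫_ℂ‖ ≤ lam * √(m + 1) * ‖b‖ := by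
  have hΦ (i : Fin 2 × ℕ) : ‖⟪Φ i, b⟫_ℂ‖ ≤ ‖b‖ := by
    simpa [Φ.orthonormal.1 i] using norm_inner_le_norm (𝕜 := ℂ) (Φ i) b
  have hphase : ‖Complex.exp (2 * Complex.I * s * ω)‖ = 1 := by simp [Complex.norm_exp]
  have hphase' : ‖Complex.exp (-(2 * Complex.I * s * ω))‖ = 1 := by simp [Complex.norm_exp]
  match j with
  | 0 =>
    have hdiff : ⟪Φ (0, m), H1 s b - H2 b⟫_ℂ = (lam * √m : ℝ)
        * Complex.exp (2 * Complex.I * s * ω) * ⟪Φ (1, m - 1), b⟫_ℂ := by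
      rw [inner_sub_right, hH1a b hb, hH2a b hb]
      push_cast
      ring
    rw [hdiff, norm_mul, norm_mul, hphase, mul_one, Complex.norm_real,
      norm_of_nonneg (by positivity)]
    gcongr
    · linarith
    · exact hΦ _
  | 1 =>
    have hdiff : ⟪Φ (1, m), H1 s b - H2 b⟫_ℂ = (lam * √(m + 1) : ℝ)
        * Complex.exp (-(2 * Complex.I * s * ω)) * ⟪Φ (0, m + 1), b⟫_ℂ := by
      rw [inner_sub_right, hH1b b hb, hH2b b hb]
      push_cast
      ring
    rw [hdiff, norm_mul, norm_mul, hphase', mul_one, Complex.norm_real,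
      norm_of_nonneg (by positivity)]
    gcongr
    exact hΦ _

theorem rwa_fock_upper_bound_general {HH : Type*} [NormedAddCommGroup HH]
    [InnerProductSpace ℂ HH] [CompleteSpace HH]
    (Φ : HilbertBasis (Fin 2 × ℕ) ℂ HH)
    (lam ω : ℝ) (hlam : 0 < lam) (hω : 0 < ω)
    (H1 : ℝ → HH →ₗ[ℂ] HH) (H2 : HH →ₗ[ℂ] HH)
    (U1 U2 : ℝ → HH →L[ℂ] HH)
    (hH1a : ∀ Ψ ∈ RapidDecay ⇑Φ, ∀ s : ℝ, ∀ m : ℕ,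
      ⟪Φ (0, m), H1 s Ψ⟫_ℂ
        = (lam : ℂ) * ((Real.sqrt (m + 1) : ℂ) * ⟪Φ (1, m + 1), Ψ⟫_ℂ
            + Complex.exp (2 * Complex.I * s * ω) * (Real.sqrt m : ℂ)
                * ⟪Φ (1, m - 1), Ψ⟫_ℂ))
    (hH1b : ∀ Ψ ∈ RapidDecay ⇑Φ, ∀ s : ℝ, ∀ m : ℕ,
      ⟪Φ (1, m), H1 s Ψ⟫_ℂ
        = (lam : ℂ) * ((Real.sqrt m : ℂ) * ⟪Φ (0, m - 1), Ψ⟫_ℂ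
            + Complex.exp (-(2 * Complex.I * s * ω)) * (Real.sqrt (m + 1) : ℂ)
                * ⟪Φ (0, m + 1), Ψ⟫_ℂ))
    (hH2a : ∀ Ψ ∈ RapidDecay ⇑Φ, ∀ m : ℕ,
      ⟪Φ (0, m), H2 Ψ⟫_ℂ = (lam : ℂ) * (Real.sqrt (m + 1) : ℂ) * ⟪Φ (1, m + 1), Ψ⟫_ℂ)
    (hH2b : ∀ Ψ ∈ RapidDecay ⇑Φ, ∀ m : ℕ,
      ⟪Φ (1, m), H2 Ψ⟫_ℂ = (lam : ℂ) * (Real.sqrt m : ℂ) * ⟪Φ (0, m - 1), Ψ⟫_ℂ)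
    (hU10 : U1 0 = 1) (hU20 : U2 0 = 1)
    (hU1unit : ∀ t : ℝ, ∀ x y : HH, ⟪U1 t x, U1 t y⟫_ℂ = ⟪x, y⟫_ℂ)
    (hU2unit : ∀ t : ℝ, ∀ x y : HH, ⟪U2 t x, U2 t y⟫_ℂ = ⟪x, y⟫_ℂ)
    (hU1surj : ∀ t : ℝ, Function.Surjective (U1 t))
    (hinv1 : ∀ t : ℝ, ∀ Ψ ∈ RapidDecay ⇑Φ, U1 t Ψ ∈ RapidDecay ⇑Φ)
    (hinv2 : ∀ t : ℝ, ∀ Ψ ∈ RapidDecay ⇑Φ, U2 t Ψ ∈ RapidDecay ⇑Φ)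
    (hode1 : ∀ Ψ ∈ RapidDecay ⇑Φ, ∀ t : ℝ,
      HasDerivAt (fun s => U1 s Ψ) ((-Complex.I) • H1 t (U1 t Ψ)) t)
    (hode2 : ∀ Ψ ∈ RapidDecay ⇑Φ, ∀ t : ℝ,
      HasDerivAt (fun s => U2 s Ψ) ((-Complex.I) • H2 (U2 t Ψ)) t)
    (j : Fin 2) (n : ℕ) (hn : 1 ≤ n) :
    ∀ t ∈ Set.Icc (0:ℝ) (π / ω),
      ‖U2 t (Φ (j, n)) - U1 t (Φ (j, n))‖ ≤ 5 * (lam / ω) * Real.sqrt ((n : ℝ) + 3) := by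
  rintro t ⟨ht, htπ⟩
  have hP1 : IsPropagator U1 (fun s => H1 s) (RapidDecay Φ) := ⟨hU10, hU1unit, hinv1, hode1⟩
  have hP2 : IsPropagator U2 (fun _ => H2) (RapidDecay Φ) := ⟨hU20, hU2unit, hinv2, hode2⟩
  have hswap (m : ℕ) : ∀ b ∈ RapidDecay Φ,
      ⟪Φ (0, m), H2 b⟫_ℂ = (lam * √(m + 1) : ℝ) * ⟪Φ (1, m + 1), b⟫_ℂ ∧
      ⟪Φ (1, m + 1), H2 b⟫_ℂ = (lam * √(m + 1) : ℝ) * ⟪Φ (0, m), b⟫_ℂ := fun b hb => by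
    rw [hH2a b hb, hH2b b hb]
    push_cast
    exact ⟨by ring, by simp [mul_assoc]⟩
  have hcounter (m : ℕ) (hm : m ≤ n + 2) (s : ℝ) (b : HH) (hb : b ∈ RapidDecay Φ) (i : Fin 2) :
      ‖⟪Φ (i, m), H1 s b - H2 b⟫_ℂ‖ ≤ lam * √(n + 3) * ‖b‖ := by
    refine (norm_inner_counterRotating_le hlam.le hH1a hH1b hH2a hH2b hb s i m).trans ?_
    gcongr lam * ?_ * _
    exact sqrt_le_sqrt (by exact_mod_cast (by omega : m + 1 ≤ n + 3))
  have hunit (i : Fin 2 × ℕ) : ‖Φ i‖ = 1 := Φ.orthonormal.1 i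
  have horth {i i' : Fin 2 × ℕ} (h : i ≠ i') : ⟪Φ i, Φ i'⟫_ℂ = 0 := Φ.orthonormal.2 h
  suffices h : ‖U2 t (Φ (j, n)) - U1 t (Φ (j, n))‖ ≤ √2 * (lam * √(n + 3)) * t by
    calc _ ≤ √2 * (lam * √(n + 3)) * (π / ω) := h.trans (by gcongr)
      _ = √2 * π * (lam / ω) * √(n + 3) := by ring
      _ ≤ 5 * (lam / ω) * √(n + 3) := by gcongr; exact sqrt_two_mul_pi_le_five
  fin_cases j
  · exact hP2.norm_sub_apply_le hP1 (hU1surj t) Φ.dense_rapidDecay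
      (Φ.orthonormal.apply_mem_rapidDecay _) (hunit _) (hunit _) (horth (by simp)) (by positivity)
      ht (hswap n)
      fun s b hb => ⟨hcounter n (by omega) s b hb 0, hcounter (n + 1) (by omega) s b hb 1⟩
  · obtain ⟨m, rfl⟩ : ∃ m, n = m + 1 := ⟨n - 1, by omega⟩
    exact hP2.norm_sub_apply_le hP1 (hU1surj t) Φ.dense_rapidDecay
      (Φ.orthonormal.apply_mem_rapidDecay _) (hunit _) (hunit _) (horth (by simp)) (by positivity)
      ht (fun b hb => (hswap m b hb).symm)
      fun s b hb => ⟨hcounter (m + 1) (by omega) s b hb 1, hcounter m (by omega) s b hb 0⟩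

/-- Upper bound of the RWA error on Fock states in the resonant case `Δ = 0`:
for `Φ_{j,n} = e_j ⊗ φ_n` with `n ≥ 1` and `g = λ/ω > 0`,
`sup_{t∈[0,π/ω]} ‖(U₂(t) - U₁(t))Φ_{j,n}‖ ≤ 5g√(n+3)`.
Here `U₁, U₂` are the interaction-picture propagators of the quantum Rabi and
Jaynes–Cummings models at resonance, characterised as unitary solutions of
`i U_j'(t) = H_j(t) U_j(t)` with
`H₁(t) = λ(σ₊⊗a + σ₋⊗a† + e^{2itω}σ₊⊗a† + e^{-2itω}σ₋⊗a)`,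
`H₂ = λ(σ₊⊗a + σ₋⊗a†)`, specified by matrix elements in the basis `Φ`. -/
theorem rwa_fock_upper_bound {HH : Type*} [NormedAddCommGroup HH]
    [InnerProductSpace ℂ HH] [CompleteSpace HH]
    (Φ : HilbertBasis (Fin 2 × ℕ) ℂ HH)
    (lam ω : ℝ) (hlam : 0 < lam) (hω : 0 < ω)
    (H1 : ℝ → HH →ₗ[ℂ] HH) (H2 : HH →ₗ[ℂ] HH)
    (U1 U2 : ℝ → HH →L[ℂ] HH)
    (hH1a : ∀ Ψ ∈ RapidDecay ⇑Φ, ∀ s : ℝ, ∀ m : ℕ,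
      ⟪Φ (0, m), H1 s Ψ⟫_ℂ
        = (lam : ℂ) * ((Real.sqrt (m + 1) : ℂ) * ⟪Φ (1, m + 1), Ψ⟫_ℂ
            + Complex.exp (2 * Complex.I * s * ω) * (Real.sqrt m : ℂ)
                * ⟪Φ (1, m - 1), Ψ⟫_ℂ))
    (hH1b : ∀ Ψ ∈ RapidDecay ⇑Φ, ∀ s : ℝ, ∀ m : ℕ,
      ⟪Φ (1, m), H1 s Ψ⟫_ℂ
        = (lam : ℂ) * ((Real.sqrt m : ℂ) * ⟪Φ (0, m - 1), Ψ⟫_ℂ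
            + Complex.exp (-(2 * Complex.I * s * ω)) * (Real.sqrt (m + 1) : ℂ)
                * ⟪Φ (0, m + 1), Ψ⟫_ℂ))
    (hH2a : ∀ Ψ ∈ RapidDecay ⇑Φ, ∀ m : ℕ,
      ⟪Φ (0, m), H2 Ψ⟫_ℂ = (lam : ℂ) * (Real.sqrt (m + 1) : ℂ) * ⟪Φ (1, m + 1), Ψ⟫_ℂ)
    (hH2b : ∀ Ψ ∈ RapidDecay ⇑Φ, ∀ m : ℕ,
      ⟪Φ (1, m), H2 Ψ⟫_ℂ = (lam : ℂ) * (Real.sqrt m : ℂ) * ⟪Φ (0, m - 1), Ψ⟫_ℂ)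
    (hU10 : U1 0 = 1) (hU20 : U2 0 = 1)
    (hU1unit : ∀ t : ℝ, ∀ x y : HH, ⟪U1 t x, U1 t y⟫_ℂ = ⟪x, y⟫_ℂ)
    (hU2unit : ∀ t : ℝ, ∀ x y : HH, ⟪U2 t x, U2 t y⟫_ℂ = ⟪x, y⟫_ℂ)
    (hU1surj : ∀ t : ℝ, Function.Surjective (U1 t))
    (hU2surj : ∀ t : ℝ, Function.Surjective (U2 t))
    (hinv1 : ∀ t : ℝ, ∀ Ψ ∈ RapidDecay ⇑Φ, U1 t Ψ ∈ RapidDecay ⇑Φ)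
    (hinv2 : ∀ t : ℝ, ∀ Ψ ∈ RapidDecay ⇑Φ, U2 t Ψ ∈ RapidDecay ⇑Φ)
    (hode1 : ∀ Ψ ∈ RapidDecay ⇑Φ, ∀ t : ℝ,
      HasDerivAt (fun s => U1 s Ψ) ((-Complex.I) • H1 t (U1 t Ψ)) t)
    (hode2 : ∀ Ψ ∈ RapidDecay ⇑Φ, ∀ t : ℝ,
      HasDerivAt (fun s => U2 s Ψ) ((-Complex.I) • H2 (U2 t Ψ)) t)
    (j : Fin 2) (n : ℕ) (hn : 1 ≤ n) :
    ∀ t ∈ Set.Icc (0:ℝ) (π / ω),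
      ‖U2 t (Φ (j, n)) - U1 t (Φ (j, n))‖ ≤ 5 * (lam / ω) * Real.sqrt ((n : ℝ) + 3) :=
  rwa_fock_upper_bound_general Φ lam ω hlam hω H1 H2 U1 U2 hH1a hH1b hH2a hH2b hU10 hU20 hU1unit
    hU2unit hU1surj hinv1 hinv2 hode1 hode2 j n hn
end
end
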